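/- Fix a context C and let Σ_*|↑C := {(C',λ') ∈ Σ : C ⊆ C'} carry the subspace topology induced from Σ_*. Then: (a) every continuous function f : Σ_*|↑C → ℝ satisfies f(C',λ') = f(C, λ'|_C) for all (C',λ') ∈ Σ_*|↑C; and (b) the restriction map f ↦ (λ ↦ f(C,λ)) is a bijection from the set of continuous real-valued functions on Σ_*|↑C onto the set of continuous real-valued functions on Σ_C. -/

import Mathlib

open WeakDual

variable (A : Type*) [CStarAlgebra A]

/-- A classical context: a commutative unital closed star-subalgebra of `A`. -/
structure Context where
  carrier : Subalgebra ℂ A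
  star_mem' : ∀ x ∈ carrier, star x ∈ carrier
  isClosed' : IsClosed (carrier : Set A)
  mul_comm' : ∀ x ∈ carrier, ∀ y ∈ carrier, x * y = y * x

variable {A}

/-- The Gelfand spectrum of a context: the character space of `C`. -/
abbrev Context.Spec (C : Context A) : Type _ := characterSpace ℂ C.carrier

/-- The inclusion of a smaller context into a larger one, as a continuous linear map. -/
def Context.inclCLM {D C : Context A} (h : D.carrier ≤ C.carrier) :
    D.carrier →L[ℂ] C.carrier where
  toLinearMap := (Subalgebra.inclusion h).toLinearMap
  cont := continuous_induced_rng.mpr continuous_subtype_val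

/-- Restriction of a character along an inclusion of contexts. -/
noncomputable def Context.restrictChar {D C : Context A} (h : D.carrier ≤ C.carrier)
    (lam : C.Spec) : D.Spec :=
  ⟨(lam : WeakDual ℂ C.carrier).comp (Context.inclCLM h), by
    constructor
    · intro h0
      have h1 : (lam : WeakDual ℂ C.carrier).comp (Context.inclCLM h) (1 : D.carrier) = 0 := by
        rw [h0]; rfl
      have h2 : (lam : WeakDual ℂ C.carrier).comp (Context.inclCLM h) (1 : D.carrier) = 1 := by
        show lam ((Context.inclCLM h) (1 : D.carrier)) = 1
        have h3 : (Context.inclCLM h) (1 : D.carrier) = (1 : C.carrier) := rfl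
        rw [h3]
        exact map_one lam
      rw [h1] at h2
      exact zero_ne_one h2
    · intro x y
      show lam ((Context.inclCLM h) (x * y)) = lam ((Context.inclCLM h) x) * lam ((Context.inclCLM h) y)
      have h4 : (Context.inclCLM h) (x * y) = (Context.inclCLM h) x * (Context.inclCLM h) y := rfl
      rw [h4]
      exact map_mul lam _ _⟩


/-- The disjoint union of all Gelfand spectra of contexts. -/
abbrev SigmaSpace (A : Type*) [CStarAlgebra A] : Type _ := (C : Context A) × C.Spec

/-- The Alexandrov topology on the poset of contexts: opens are the upward closed sets. -/
instance : TopologicalSpace (Context A) where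
  IsOpen s := ∀ C ∈ s, ∀ D : Context A, C.carrier ≤ D.carrier → D ∈ s
  isOpen_univ := fun _ _ _ _ => trivial
  isOpen_inter := fun s t hs ht C hC D hD => ⟨hs C hC.1 D hD, ht C hC.2 D hD⟩
  isOpen_sUnion := fun S hS C hC D hD => by
    obtain ⟨s, hsS, hCs⟩ := hC
    exact ⟨s, hsS, hS s hsS C hCs D hD⟩

/-- The topology `𝒪 Σ_*` of the covariant approach: a set is open iff each of its fibres
is open and it is closed under passing to extensions of characters. -/
instance : TopologicalSpace (SigmaSpace A) where
  IsOpen U := (∀ C : Context A, IsOpen {lam : C.Spec | Sigma.mk C lam ∈ U}) ∧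
    ∀ (C C' : Context A) (h : C.carrier ≤ C'.carrier) (lam' : C'.Spec),
      Sigma.mk C (Context.restrictChar h lam') ∈ U → Sigma.mk C' lam' ∈ U
  isOpen_univ := ⟨fun _ => isOpen_univ, fun _ _ _ _ _ => trivial⟩
  isOpen_inter := fun U V hU hV => ⟨fun C => (hU.1 C).inter (hV.1 C),
    fun C C' h lam hm => ⟨hU.2 C C' h lam hm.1, hV.2 C C' h lam hm.2⟩⟩
  isOpen_sUnion := fun S hS => by
    constructor
    · intro C
      have h1 : {lam : C.Spec | Sigma.mk C lam ∈ ⋃₀ S} =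
          ⋃ U ∈ S, {lam : C.Spec | Sigma.mk C lam ∈ U} := by
        ext lam; simp
      rw [h1]
      exact isOpen_biUnion fun U hU => (hS U hU).1 C
    · rintro C C' h lam ⟨U, hUS, hmU⟩
      exact ⟨U, hUS, (hS U hUS).2 C C' h lam hmU⟩

/-!
Restricting characters is continuous, and an open set of `Σ_*` around `(C, λ'|_C)`
is forced by the upward-closure condition to contain `(C', λ')`. So `(C', λ')` specializes to
`(C, λ'|_C)`, and a continuous map into a T1 space cannot separate them: it factors through the
continuous retraction `(C', λ') ↦ λ'|_C` of `Σ_*|↑C` onto the fibre `Σ_C`.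
-/

open Set Function

section Retraction

variable {X Y Z : Type*} [TopologicalSpace X] [TopologicalSpace Y] [TopologicalSpace Z]

theorem Set.bijOn_comp_continuous_of_retraction {s : Y → X} {r : X → Y} (hs : Continuous s)
    (hr : Continuous r) (hrs : LeftInverse r s)
    (hfactor : ∀ f : X → Z, Continuous f → ∀ x, f (s (r x)) = f x) :
    BijOn (fun f : X → Z => f ∘ s) {f | Continuous f} {g | Continuous g} := by
  refine ⟨fun f hf => hf.comp hs, fun f hf g hg hfg => ?_, fun g hg => ⟨g ∘ r, hg.comp hr, ?_⟩⟩
  · funext x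
    rw [← hfactor f hf, ← hfactor g hg]
    exact congrFun hfg (r x)
  · funext y
    exact congrArg g (hrs y)

end Retraction

namespace Context

@[simp]
theorem restrictChar_refl (C : Context A) (lam : C.Spec) : restrictChar le_rfl lam = lam := rfl

theorem continuous_restrictChar {D C : Context A} (h : D.carrier ≤ C.carrier) :
    Continuous (restrictChar h) :=
  (WeakDual.continuous_of_continuous_eval fun d =>
    (WeakDual.eval_continuous (inclCLM h d)).comp continuous_subtype_val).subtype_mk _

theorem continuous_sigmaMk (C : Context A) :
    Continuous (Sigma.mk C : C.Spec → SigmaSpace A) :=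
  continuous_def.2 fun _ hU => hU.1 C

theorem specializes_restrictChar {C C' : Context A} (h : C.carrier ≤ C'.carrier) (lam' : C'.Spec) :
    (⟨C', lam'⟩ : SigmaSpace A) ⤳ ⟨C, restrictChar h lam'⟩ :=
  specializes_iff_forall_open.2 fun _ hU hmem => hU.2 C C' h lam' hmem

/-- The subspace `Σ_*|↑C` of `Σ_*` over the contexts containing `C`. -/
abbrev SigmaAbove (C : Context A) : Type _ := {p : SigmaSpace A // C.carrier ≤ p.1.carrier}

def sigmaAboveMk (C : Context A) (lam : C.Spec) : C.SigmaAbove := ⟨⟨C, lam⟩, le_rfl⟩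

noncomputable def sigmaAboveRestrict (C : Context A) (p : C.SigmaAbove) : C.Spec :=
  restrictChar p.2 p.1.2

theorem sigmaAboveRestrict_sigmaAboveMk (C : Context A) :
    LeftInverse C.sigmaAboveRestrict C.sigmaAboveMk :=
  restrictChar_refl C

theorem continuous_sigmaAboveMk (C : Context A) : Continuous C.sigmaAboveMk :=
  (continuous_sigmaMk C).subtype_mk _

def restrictPreimage (C : Context A) (V : Set C.Spec) : Set (SigmaSpace A) :=
  {q | ∃ h : C.carrier ≤ q.1.carrier, restrictChar h q.2 ∈ V}

theorem isOpen_restrictPreimage (C : Context A) {V : Set C.Spec} (hV : IsOpen V) :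
    IsOpen (C.restrictPreimage V) := by
  refine ⟨fun D => ?_, fun D D' hDD' lam ⟨hCD, hlam⟩ => ⟨hCD.trans hDD', hlam⟩⟩
  by_cases hCD : C.carrier ≤ D.carrier
  · convert (continuous_restrictChar hCD).isOpen_preimage V hV using 1
    exact Set.ext fun lam => ⟨fun ⟨_, hlam⟩ => hlam, fun hlam => ⟨hCD, hlam⟩⟩
  · convert isOpen_empty
    exact Set.eq_empty_of_forall_notMem fun lam ⟨h, _⟩ => hCD h

theorem continuous_sigmaAboveRestrict (C : Context A) : Continuous C.sigmaAboveRestrict :=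
  continuous_def.2 fun V hV =>
    have hpre : C.sigmaAboveRestrict ⁻¹' V = Subtype.val ⁻¹' C.restrictPreimage V :=
      Set.ext fun p => ⟨fun hp => ⟨p.2, hp⟩, fun ⟨_, hp⟩ => hp⟩
    hpre ▸ (C.isOpen_restrictPreimage hV).preimage continuous_subtype_val

theorem specializes_sigmaAboveMk_sigmaAboveRestrict (C : Context A) (p : C.SigmaAbove) :
    p ⤳ C.sigmaAboveMk (C.sigmaAboveRestrict p) :=
  (subtype_specializes_iff _ _).2 (specializes_restrictChar p.2 p.1.2)

theorem apply_sigmaAboveMk_sigmaAboveRestrict {X : Type*} [TopologicalSpace X] [T1Space X]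
    (C : Context A) {f : C.SigmaAbove → X} (hf : Continuous f) (p : C.SigmaAbove) :
    f (C.sigmaAboveMk (C.sigmaAboveRestrict p)) = f p :=
  ((C.specializes_sigmaAboveMk_sigmaAboveRestrict p).map hf).eq.symm

end Context

/-- Fix a context `C` and equip `Σ_*|↑C = {(C',λ') : C ⊆ C'}` with the
subspace topology induced from `Σ_*`. Then (a) every continuous real-valued function `f` on
`Σ_*|↑C` satisfies `f (C', λ') = f (C, λ'|_C)`, and (b) the restriction map
`f ↦ (λ ↦ f (C, λ))` is a bijection from the continuous real-valued functions on `Σ_*|↑C`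
onto the continuous real-valued functions on `Σ_C`. -/
theorem statement15 (C : Context A) :
    (∀ f : {p : SigmaSpace A // C.carrier ≤ p.1.carrier} → ℝ, Continuous f →
      ∀ p : {p : SigmaSpace A // C.carrier ≤ p.1.carrier},
        f p = f ⟨⟨C, Context.restrictChar p.2 p.1.2⟩, le_rfl⟩) ∧
    Set.BijOn
      (fun (f : {p : SigmaSpace A // C.carrier ≤ p.1.carrier} → ℝ) =>
        fun lam : C.Spec => f ⟨⟨C, lam⟩, le_rfl⟩)
      {f | Continuous f} {g : C.Spec → ℝ | Continuous g} :=
  ⟨fun _ hf p => (C.apply_sigmaAboveMk_sigmaAboveRestrict hf p).symm,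
    bijOn_comp_continuous_of_retraction C.continuous_sigmaAboveMk
      C.continuous_sigmaAboveRestrict C.sigmaAboveRestrict_sigmaAboveMk
      fun _ hf => C.apply_sigmaAboveMk_sigmaAboveRestrict hf⟩
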